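/- arXiv:2308.12924 — 3 statements merged into one kernel-verified Lean document; each statement's English description precedes it below -/
import Mathlib

section
/- Define g(b) = inf_{ν > 0} s(ν, b) for b ∈ (0, M² + Kσ²), where s(ν, b) = (1 + 2σ²ν)^{−K/2} exp(ν b − ν M²/(1 + 2σ²ν)). Then g is strictly monotonically increasing on (0, M² + Kσ²). -/
open Real Set

private lemma chernoff_aux1 (σ2 M2 ν : ℝ) (hσ : 0 < σ2) (hM : 0 ≤ M2) (hν : 0 < ν) :
    ν*M2/(1+2*σ2*ν) ≤ M2/(2*σ2) := by
  have hc : (0:ℝ) < 1 + 2*σ2*ν := by nlinarith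
  rw [div_le_div_iff₀ hc (by positivity)]
  nlinarith

private lemma chernoff_aux2 (σ2 M2 ν : ℝ) (hσ : 0 < σ2) (hM : 0 ≤ M2) (hν : 0 < ν) :
    ν*M2/(1+2*σ2*ν) ≤ ν*M2 := by
  have hc : (0:ℝ) < 1 + 2*σ2*ν := by nlinarith
  rw [div_le_iff₀ hc]
  have h : 0 ≤ σ2*ν^2*M2 := by positivity
  nlinarith [h]


set_option maxHeartbeats 1000000 in
theorem chernoff_inf_strictMono (σ2 M2 : ℝ) (K : ℕ)
    (hσ : 0 < σ2) (hK : 1 ≤ K) (hM : 0 ≤ M2) :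
    StrictMonoOn
      (fun b : ℝ =>
        ⨅ ν : {x : ℝ // 0 < x},
          (1 + 2 * σ2 * (ν : ℝ)) ^ (-(K : ℝ) / 2) *
            Real.exp ((ν : ℝ) * b - (ν : ℝ) * M2 / (1 + 2 * σ2 * (ν : ℝ))))
      (Set.Ioo 0 (M2 + (K : ℝ) * σ2)) := by
  have hKr1 : (1:ℝ) ≤ (K:ℝ) := by exact_mod_cast hK
  set s : ℝ → ℝ → ℝ := fun ν b =>
    (1 + 2 * σ2 * ν) ^ (-(K : ℝ) / 2) * Real.exp (ν * b - ν * M2 / (1 + 2 * σ2 * ν)) with hs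
  intro b1 hb1 b2 hb2 h12
  simp only [Set.mem_Ioo] at hb1 hb2
  show (⨅ ν : {x : ℝ // 0 < x}, s ν b1) < ⨅ ν : {x : ℝ // 0 < x}, s ν b2
  have ha : ∀ ν : ℝ, 0 ≤ ν → 0 < 1 + 2 * σ2 * ν := fun ν hν => by nlinarith
  have hspos : ∀ (ν : ℝ), 0 < ν → ∀ b, 0 < s ν b := fun ν hν b =>
    mul_pos (Real.rpow_pos_of_pos (ha ν hν.le) _) (Real.exp_pos _)
  have hbdd : ∀ b, BddBelow (Set.range fun ν : {x : ℝ // 0 < x} => s ν b) := fun b =>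
    ⟨0, by rintro y ⟨ν, rfl⟩; exact (hspos ν ν.2 b).le⟩
  have hginf_le : ∀ b (ν : ℝ), 0 < ν → (⨅ ν : {x : ℝ // 0 < x}, s ν b) ≤ s ν b :=
    fun b ν hν => ciInf_le (hbdd b) ⟨ν, hν⟩
  -- Step A: find ν1 > 0 with s ν1 b1 < 1
  have hev1 : ∀ᶠ ν in nhds (0:ℝ),
      (2*(b1 - M2) + 4*σ2*M2*ν) * (1 + 2*(K:ℝ)*σ2*ν) < 2*(K:ℝ)*σ2 := by
    have hc : ContinuousAt (fun ν : ℝ => (2*(b1 - M2) + 4*σ2*M2*ν) * (1 + 2*(K:ℝ)*σ2*ν)) 0 := by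
      fun_prop
    have h0 : (2*(b1 - M2) + 4*σ2*M2*0) * (1 + 2*(K:ℝ)*σ2*0) < 2*(K:ℝ)*σ2 := by
      simp only [mul_zero, add_zero, mul_one]
      linarith [hb1.2]
    exact hc.tendsto.eventually_lt_const h0
  have hev2 : ∀ᶠ ν in nhds (0:ℝ), 2*ν*(b1 - M2) + 4*σ2*M2*ν^2 < 1 := by
    have hc : ContinuousAt (fun ν : ℝ => 2*ν*(b1 - M2) + 4*σ2*M2*ν^2) 0 := by fun_prop
    have h0 : 2*0*(b1 - M2) + 4*σ2*M2*(0:ℝ)^2 < 1 := by norm_num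
    exact hc.tendsto.eventually_lt_const h0
  have hev3 : ∀ᶠ ν in nhdsWithin (0:ℝ) (Set.Ioi 0), (((2*(b1 - M2) + 4*σ2*M2*ν) * (1 + 2*(K:ℝ)*σ2*ν) < 2*(K:ℝ)*σ2) ∧ (2*ν*(b1 - M2) + 4*σ2*M2*ν^2 < 1)) ∧ ν ∈ Set.Ioi (0:ℝ) :=
    ((hev1.and hev2).filter_mono nhdsWithin_le_nhds).and self_mem_nhdsWithin
  obtain ⟨ν1, ⟨hF1, hy1⟩, hν1pos⟩ := hev3.exists
  rw [Set.mem_Ioi] at hν1pos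
  have hq_lt : s ν1 b1 < 1 := by
    set x1 : ℝ := 2*σ2*ν1 with hx1
    have hx1pos : 0 < x1 := by positivity
    have hc1 : 0 < 1 + x1 := by linarith
    set y1 : ℝ := 2*ν1*(b1 - M2) + 4*σ2*M2*ν1^2 with hy1def
    have h1my : 0 < 1 - y1 := by linarith
    -- exp y1 * (1 - y1) ≤ 1
    have hexp1 : Real.exp y1 * (1 - y1) ≤ 1 := by
      have h : 1 - y1 ≤ Real.exp (-y1) := by linarith [Real.add_one_le_exp (-y1)]
      calc Real.exp y1 * (1 - y1) ≤ Real.exp y1 * Real.exp (-y1) :=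
            mul_le_mul_of_nonneg_left h (Real.exp_pos y1).le
        _ = 1 := by rw [← Real.exp_add]; simp
    have hmulF : y1 * (1 + 2*(K:ℝ)*σ2*ν1) < 2*(K:ℝ)*σ2*ν1 := by
      have h := mul_lt_mul_of_pos_left hF1 hν1pos
      calc y1 * (1 + 2*(K:ℝ)*σ2*ν1)
          = ν1 * ((2*(b1 - M2) + 4*σ2*M2*ν1) * (1 + 2*(K:ℝ)*σ2*ν1)) := by rw [hy1def]; ring
        _ < ν1 * (2*(K:ℝ)*σ2) := h
        _ = 2*(K:ℝ)*σ2*ν1 := by ring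
    -- (1 - y1) * (1 + K*x1) > 1
    have hprod : (1:ℝ) < (1 - y1) * (1 + (K:ℝ)*x1) := by rw [hx1]; nlinarith [hmulF]
    have hexp2 : Real.exp y1 < 1 + (K:ℝ)*x1 := by
      have h' : (1 - y1) * Real.exp y1 < (1 - y1) * (1 + (K:ℝ)*x1) := by
        nlinarith [hexp1, hprod]
      exact lt_of_mul_lt_mul_left h' h1my.le
    have hBern : 1 + (K:ℝ)*x1 ≤ (1 + x1)^K := one_add_mul_le_pow (by linarith) K
    have hsq : Real.exp (y1/2) < (1 + x1) ^ ((K:ℝ)/2) := by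
      have hr : ((1 + x1) ^ ((K:ℝ)/2))^2 = (1 + x1)^K := by
        rw [sq, ← Real.rpow_add hc1, ← Real.rpow_natCast (1+x1) K]
        norm_num
      have he : (Real.exp (y1/2))^2 = Real.exp y1 := by
        rw [sq, ← Real.exp_add]; ring_nf
      refine lt_of_pow_lt_pow_left₀ 2 (Real.rpow_nonneg hc1.le _) ?_
      rw [hr, he]; exact lt_of_lt_of_le hexp2 hBern
    have hle : Real.exp (ν1*b1 - ν1*M2/(1+x1)) ≤ Real.exp (y1/2) := by
      rw [Real.exp_le_exp]
      have h2 : ν1*M2 - 2*σ2*M2*ν1^2 ≤ ν1*M2/(1+x1) := by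
        rw [le_div_iff₀ hc1, hx1]
        have hn : 0 ≤ σ2^2*M2*ν1^3 := by positivity
        nlinarith [hn]
      rw [hy1def]; ring_nf; ring_nf at h2; linarith
    have hA : (0:ℝ) < (1 + x1) ^ (-(K:ℝ)/2) := Real.rpow_pos_of_pos hc1 _
    have hmul : (1 + x1) ^ (-(K:ℝ)/2) * (1 + x1) ^ ((K:ℝ)/2) = 1 := by
      rw [← Real.rpow_add hc1]
      have he0 : (-(K:ℝ)/2 + (K:ℝ)/2) = 0 := by ring
      rw [he0, Real.rpow_zero]
    calc s ν1 b1 = (1 + x1) ^ (-(K:ℝ)/2) * Real.exp (ν1*b1 - ν1*M2/(1+x1)) := rfl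
      _ ≤ (1 + x1) ^ (-(K:ℝ)/2) * Real.exp (y1/2) := by
          exact mul_le_mul_of_nonneg_left hle hA.le
      _ < (1 + x1) ^ (-(K:ℝ)/2) * (1 + x1) ^ ((K:ℝ)/2) := by
          exact mul_lt_mul_of_pos_left hsq hA
      _ = 1 := hmul
  set q : ℝ := s ν1 b1 with hqdef
  have hqpos : 0 < q := hspos ν1 hν1pos b1
  have hgq : (⨅ ν : {x : ℝ // 0 < x}, s ν b1) ≤ q := hginf_le b1 ν1 hν1pos
  have hq1 : q < 1 := hq_lt
  -- Step C: choose small ν0 with q < G(ν0)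
  have hGcont : ContinuousAt (fun ν : ℝ => (1 + 2*σ2*ν) ^ (-(K:ℝ)/2) * Real.exp (-(ν*M2))) 0 := by
    have h1 : ContinuousAt (fun ν : ℝ => 1 + 2*σ2*ν) 0 := by fun_prop
    have h2 : ContinuousAt (fun ν : ℝ => (1 + 2*σ2*ν) ^ (-(K:ℝ)/2)) 0 :=
      h1.rpow_const (Or.inl (by norm_num))
    exact h2.mul (by fun_prop)
  have hGtend : Filter.Tendsto (fun ν : ℝ => (1 + 2*σ2*ν) ^ (-(K:ℝ)/2) * Real.exp (-(ν*M2)))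
      (nhds 0) (nhds 1) := by
    have h := hGcont.tendsto
    have h0 : (1 + 2*σ2*(0:ℝ)) ^ (-(K:ℝ)/2) * Real.exp (-((0:ℝ)*M2)) = 1 := by
      norm_num
    rwa [h0] at h
  have hevq : ∀ᶠ ν in nhdsWithin (0:ℝ) (Set.Ioi 0),
      (q < (1 + 2*σ2*ν) ^ (-(K:ℝ)/2) * Real.exp (-(ν*M2))) ∧ ν ∈ Set.Ioi (0:ℝ) :=
    ((hGtend.eventually_const_lt hq1).filter_mono nhdsWithin_le_nhds).and self_mem_nhdsWithin
  obtain ⟨ν0, hGq, hν0pos⟩ := hevq.exists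
  rw [Set.mem_Ioi] at hν0pos
  set G0 : ℝ := (1 + 2*σ2*ν0) ^ (-(K:ℝ)/2) * Real.exp (-(ν0*M2)) with hG0def
  -- Step D: large ν bound
  set N : ℝ := max 1 ((1+2*σ2)^K * Real.exp (M2/σ2) * (Nat.factorial (K+1)) / (2*b2)^(K+1))
    with hNdef
  have hNpos : (0:ℝ) < N := lt_of_lt_of_le one_pos (le_max_left _ _)
  have hlarge : ∀ ν : ℝ, N ≤ ν → 1 ≤ s ν b2 := by
    intro ν hν
    have hν1' : (1:ℝ) ≤ ν := le_trans (le_max_left _ _) hν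
    have hνpos : (0:ℝ) < ν := lt_of_lt_of_le one_pos hν1'
    have hcν : 0 < 1 + 2*σ2*ν := ha ν hνpos.le
    have hb2pos := hb2.1
    have hfac : (0:ℝ) < (Nat.factorial (K+1) : ℝ) := by
      exact_mod_cast Nat.factorial_pos (K+1)
    have hD : (0:ℝ) < (2*b2)^(K+1) := by positivity
    have hkey : (1 + 2*σ2*ν)^K * Real.exp (M2/σ2) ≤ Real.exp (2*ν*b2) := by
      have h1 : (1 + 2*σ2*ν)^K ≤ ((1+2*σ2)*ν)^K := by
        apply pow_le_pow_left₀ hcν.le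
        nlinarith
      have h2 : (2*ν*b2)^(K+1) / (Nat.factorial (K+1) : ℝ) ≤ Real.exp (2*ν*b2) := by
        have hsum := Real.sum_le_exp_of_nonneg (by positivity : (0:ℝ) ≤ 2*ν*b2) (K+2)
        have hmem : (K+1) ∈ Finset.range (K+2) := Finset.mem_range.2 (by omega)
        have hterm := Finset.single_le_sum
          (f := fun i => (2*ν*b2)^i / (Nat.factorial i : ℝ))
          (fun i _ => by positivity) hmem
        exact le_trans hterm hsum
      have hN0 : (1+2*σ2)^K * Real.exp (M2/σ2) * (Nat.factorial (K+1) : ℝ) / (2*b2)^(K+1) ≤ ν :=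
        le_trans (le_max_right _ _) hν
      have hN0' : (1+2*σ2)^K * Real.exp (M2/σ2) * (Nat.factorial (K+1) : ℝ) ≤ ν * (2*b2)^(K+1) :=
        (div_le_iff₀ hD).1 hN0
      have h3 : ((1+2*σ2)*ν)^K * Real.exp (M2/σ2) ≤ (2*ν*b2)^(K+1) / (Nat.factorial (K+1) : ℝ) := by
        rw [le_div_iff₀ hfac]
        have hpow : (2*ν*b2)^(K+1) = ν^(K+1) * (2*b2)^(K+1) := by
          rw [← mul_pow]; congr 1; ring
        calc ((1+2*σ2)*ν)^K * Real.exp (M2/σ2) * (Nat.factorial (K+1) : ℝ)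
            = ν^K * ((1+2*σ2)^K * Real.exp (M2/σ2) * (Nat.factorial (K+1) : ℝ)) := by
              rw [mul_pow]; ring
          _ ≤ ν^K * (ν * (2*b2)^(K+1)) :=
              mul_le_mul_of_nonneg_left hN0' (pow_nonneg hνpos.le K)
          _ = (2*ν*b2)^(K+1) := by rw [hpow, pow_succ]; ring
      calc (1 + 2*σ2*ν)^K * Real.exp (M2/σ2)
          ≤ ((1+2*σ2)*ν)^K * Real.exp (M2/σ2) :=
            mul_le_mul_of_nonneg_right h1 (Real.exp_pos _).le
        _ ≤ (2*ν*b2)^(K+1) / (Nat.factorial (K+1) : ℝ) := h3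
        _ ≤ Real.exp (2*ν*b2) := h2
    have h4 : (1 + 2*σ2*ν) ^ ((K:ℝ)/2) ≤ Real.exp (ν*b2 - M2/(2*σ2)) := by
      apply le_of_pow_le_pow_left₀ two_ne_zero (Real.exp_pos _).le
      have hr : ((1 + 2*σ2*ν) ^ ((K:ℝ)/2))^2 = (1 + 2*σ2*ν)^K := by
        rw [sq, ← Real.rpow_add hcν, ← Real.rpow_natCast (1+2*σ2*ν) K]; norm_num
      have he : (Real.exp (ν*b2 - M2/(2*σ2)))^2 = Real.exp (2*ν*b2 - M2/σ2) := by
        rw [sq, ← Real.exp_add]; congr 1; field_simp; ring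
      rw [hr, he, Real.exp_sub, le_div_iff₀ (Real.exp_pos _)]
      exact hkey
    have h5 : (1 + 2*σ2*ν) ^ ((K:ℝ)/2) ≤ Real.exp (ν*b2 - ν*M2/(1+2*σ2*ν)) := by
      refine le_trans h4 (Real.exp_le_exp.2 ?_)
      have h6 := chernoff_aux1 σ2 M2 ν hσ hM hνpos
      linarith
    have hApos : 0 < (1 + 2*σ2*ν) ^ (-(K:ℝ)/2) := Real.rpow_pos_of_pos hcν _
    calc (1:ℝ) = (1 + 2*σ2*ν) ^ (-(K:ℝ)/2) * (1 + 2*σ2*ν) ^ ((K:ℝ)/2) := by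
          rw [← Real.rpow_add hcν, show (-(K:ℝ)/2 + (K:ℝ)/2) = 0 by ring, Real.rpow_zero]
      _ ≤ s ν b2 := mul_le_mul_of_nonneg_left h5 hApos.le
  -- antitone base factor
  have hanti : ∀ u v : ℝ, 0 ≤ u → u ≤ v →
      (1 + 2*σ2*v) ^ (-(K:ℝ)/2) ≤ (1 + 2*σ2*u) ^ (-(K:ℝ)/2) := by
    intro u v hu huv
    have h1 : 0 < 1 + 2*σ2*u := ha u hu
    have h2 : 0 < 1 + 2*σ2*v := ha v (le_trans hu huv)
    rw [show (-(K:ℝ)/2) = -((K:ℝ)/2) by ring, Real.rpow_neg h1.le, Real.rpow_neg h2.le]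
    have h3 : 2*σ2*u ≤ 2*σ2*v := mul_le_mul_of_nonneg_left huv (by linarith)
    exact inv_anti₀ (Real.rpow_pos_of_pos h1 _)
      (Real.rpow_le_rpow h1.le (by linarith) (by positivity))
  -- middle lower bound
  set m : ℝ := (1 + 2*σ2*N) ^ (-(K:ℝ)/2) * Real.exp (-(M2/(2*σ2))) with hmdef
  have hmpos : 0 < m :=
    mul_pos (Real.rpow_pos_of_pos (ha N hNpos.le) _) (Real.exp_pos _)
  have hmid : ∀ ν : ℝ, 0 < ν → ν ≤ N → m ≤ s ν b1 := by
    intro ν hν hνN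
    have hcν := ha ν hν.le
    have h1 : Real.exp (-(M2/(2*σ2))) ≤ Real.exp (ν*b1 - ν*M2/(1+2*σ2*ν)) := by
      rw [Real.exp_le_exp]
      have h2 := chernoff_aux1 σ2 M2 ν hσ hM hν
      linarith [mul_pos hν hb1.1]
    exact mul_le_mul (hanti ν N hν.le hνN) h1 (Real.exp_pos _).le
      (Real.rpow_pos_of_pos hcν _).le
  -- small region lower bound
  have hsmall : ∀ ν : ℝ, 0 < ν → ν ≤ ν0 → G0 ≤ s ν b2 := by
    intro ν hν hνν0
    have hcν := ha ν hν.le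
    have h1 : Real.exp (-(ν0*M2)) ≤ Real.exp (ν*b2 - ν*M2/(1+2*σ2*ν)) := by
      rw [Real.exp_le_exp]
      have h2 := chernoff_aux2 σ2 M2 ν hσ hM hν
      have h3 : ν*M2 ≤ ν0*M2 := mul_le_mul_of_nonneg_right hνν0 hM
      linarith [mul_pos hν hb2.1, mul_le_mul_of_nonneg_right hνν0 hM]
    exact mul_le_mul (hanti ν ν0 hν.le hνν0) h1 (Real.exp_pos _).le
      (Real.rpow_pos_of_pos hcν _).le
  -- assemble
  have hδ : 0 < b2 - b1 := by linarith
  have hE : 1 < Real.exp (ν0*(b2-b1)) := by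
    rw [← Real.exp_zero]
    exact Real.exp_lt_exp.2 (by positivity)
  set ε : ℝ := min (min (G0 - q) (1 - q)) (m * (Real.exp (ν0*(b2-b1)) - 1)) with hεdef
  have hεpos : 0 < ε := by
    refine lt_min (lt_min (by linarith) (by linarith)) ?_
    have : 0 < Real.exp (ν0*(b2-b1)) - 1 := by linarith
    positivity
  calc (⨅ ν : {x:ℝ//0<x}, s ν b1) < (⨅ ν : {x:ℝ//0<x}, s ν b1) + ε :=
        lt_add_of_pos_right _ hεpos
    _ ≤ ⨅ ν : {x:ℝ//0<x}, s ν b2 := by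
        apply le_ciInf
        rintro ⟨ν, hν⟩
        show (⨅ ν : {x:ℝ//0<x}, s ν b1) + ε ≤ s ν b2
        rcases le_or_gt ν ν0 with hcase | hcase
        · have hb := hsmall ν hν hcase
          have hε1 : ε ≤ G0 - q := le_trans (min_le_left _ _) (min_le_left _ _)
          linarith
        · rcases le_or_gt N ν with hcase2 | hcase2
          · have hb := hlarge ν hcase2
            have hε2 : ε ≤ 1 - q := le_trans (min_le_left _ _) (min_le_right _ _)
            linarith
          · have hsb1 := hmid ν hν hcase2.le
            have hgs := hginf_le b1 ν hν
            have hε3 : ε ≤ m * (Real.exp (ν0*(b2-b1)) - 1) := min_le_right _ _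
            have heq : s ν b2 = s ν b1 * Real.exp (ν*(b2-b1)) := by
              simp only [hs, mul_assoc, ← Real.exp_add]
              congr 2
              ring
            have hEν : Real.exp (ν0*(b2-b1)) ≤ Real.exp (ν*(b2-b1)) :=
              Real.exp_le_exp.2 (mul_le_mul_of_nonneg_right hcase.le hδ.le)
            have hspos' := hspos ν hν b1
            have hp1 : s ν b1 * Real.exp (ν0*(b2-b1)) ≤ s ν b1 * Real.exp (ν*(b2-b1)) :=
              mul_le_mul_of_nonneg_left hEν hspos'.le
            have hp2 : 0 ≤ (s ν b1 - m) * (Real.exp (ν0*(b2-b1)) - 1) :=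
              mul_nonneg (by linarith) (by linarith)
            rw [heq]
            nlinarith [hp1, hp2]
end

section
/- Define g(b) = inf_{ν>0} s(ν, b). Then lim_{b→0⁺} g(b) = 0 and lim_{b→(M²+Kσ²)⁻} g(b) = 1. Consequently, for every ε ∈ (0, 1) there exists a unique b ∈ (0, M² + Kσ²) with g(b) = ε. -/
/-!
Write `s(ν, b) = exp (ν b - φ ν)` with `φ ν = (K/2) log (1 + 2σ²ν) + ν M² / (1 + 2σ²ν)`. Then
`log g b = inf_{ν > 0} (ν b - φ ν)` is an infimum of affine functions of `b`, hence concave, and it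
is finite for `b > 0` because `φ` grows only logarithmically; so `g` is continuous on `(0, ∞)`.
With `B = M² + Kσ²` we have `φ ν ≤ B ν` and `φ'(0) = B`, so `log g` vanishes at `B` and is
negative on `(0, B)`: concavity makes it strictly increasing on `(0, B]`, and continuity at `B`
gives the limit `1`. Near `0`, `g` is upper semicontinuous and nonnegative with
`g 0 = inf_ν exp (-φ ν) = 0`, since `φ → ∞`. The intermediate value theorem gives the threshold.
-/

open Real Set Filter Topology

theorem existsUnique_mem_Ioo_eq_of_strictMonoOn {α δ : Type*} [ConditionallyCompleteLinearOrder α]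
    [DenselyOrdered α] [TopologicalSpace α] [OrderTopology α] [LinearOrder δ] [TopologicalSpace δ]
    [OrderClosedTopology δ] {f : α → δ} {a c : α} {l : δ} (hac : a < c)
    (hcont : ContinuousOn f (Ioc a c)) (hmono : StrictMonoOn f (Ioc a c))
    (hlim : Tendsto f (𝓝[>] a) (𝓝 l)) {y : δ} (hy : y ∈ Ioo l (f c)) :
    ∃! x : α, x ∈ Ioo a c ∧ f x = y := by
  have : (𝓝[>] a).NeBot := nhdsGT_neBot_of_exists_gt ⟨c, hac⟩
  obtain ⟨x₀, hfx₀, hx₀⟩ := ((hlim.eventually_lt_const hy.1).and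
    (Ioo_mem_nhdsGT hac)).exists
  obtain ⟨x, hx, rfl⟩ := hcont.surjOn_Icc ⟨hx₀.1, hx₀.2.le⟩ ⟨hac, le_rfl⟩ ⟨hfx₀.le, hy.2.le⟩
  have hxc : x < c := hx.2.lt_of_ne (by rintro rfl; exact hy.2.false)
  refine ⟨x, ⟨⟨hx.1, hxc⟩, rfl⟩, fun x' hx' => ?_⟩
  exact hmono.injOn ⟨hx'.1.1, hx'.1.2.le⟩ hx hx'.2

namespace Chernoff

noncomputable def chernoffBound (φ : ℝ → ℝ) (b : ℝ) : ℝ :=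
  ⨅ ν : {x : ℝ // 0 < x}, exp (ν * b - φ ν)

/-- Equal to `log (chernoffBound φ b)` only where the family is bounded below; elsewhere the
infimum is `-∞` and Lean's `⨅` returns the junk value `0`. -/
noncomputable def logChernoffBound (φ : ℝ → ℝ) (b : ℝ) : ℝ :=
  ⨅ ν : {x : ℝ // 0 < x}, ((ν : ℝ) * b - φ ν)

section General

variable {φ : ℝ → ℝ} {b B ν : ℝ}

lemma bddBelow_range_exp_mul_sub :
    BddBelow (range fun ν : {x : ℝ // 0 < x} => exp (ν * b - φ ν)) :=
  ⟨0, by rintro _ ⟨ν, rfl⟩; positivity⟩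

lemma chernoffBound_nonneg : 0 ≤ chernoffBound φ b :=
  Real.iInf_nonneg fun _ => (exp_pos _).le

lemma chernoffBound_le (hν : 0 < ν) : chernoffBound φ b ≤ exp (ν * b - φ ν) :=
  ciInf_le bddBelow_range_exp_mul_sub (⟨ν, hν⟩ : {x : ℝ // 0 < x})

lemma chernoffBound_eq_exp_logChernoffBound
    (h : BddBelow (range fun ν : {x : ℝ // 0 < x} => (ν : ℝ) * b - φ ν)) :
    chernoffBound φ b = exp (logChernoffBound φ b) :=
  (Monotone.map_ciInf_of_continuousAt continuous_exp.continuousAt exp_monotone h).symm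

lemma concaveOn_logChernoffBound {s : Set ℝ} (hs : Convex ℝ s)
    (h : ∀ b ∈ s, BddBelow (range fun ν : {x : ℝ // 0 < x} => (ν : ℝ) * b - φ ν)) :
    ConcaveOn ℝ s (logChernoffBound φ) := by
  refine ⟨hs, fun x hx y hy a c ha hc hac => le_ciInf fun ν => ?_⟩
  calc a • logChernoffBound φ x + c • logChernoffBound φ y
      ≤ a • ((ν : ℝ) * x - φ ν) + c • ((ν : ℝ) * y - φ ν) := by
        gcongr
        exacts [ciInf_le (h x hx) ν, ciInf_le (h y hy) ν]
    _ = ν * (a • x + c • y) - φ ν := by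
        simp only [smul_eq_mul]
        linear_combination (-φ ν) * hac

lemma chernoffBound_zero (hφ : Tendsto φ atTop atTop) : chernoffBound φ 0 = 0 := by
  have h : Tendsto (fun ν => exp (ν * 0 - φ ν)) atTop (𝓝 0) := by
    simpa only [mul_zero, zero_sub, Function.comp_def] using
      tendsto_exp_atBot.comp (tendsto_neg_atTop_atBot.comp hφ)
  refine le_antisymm (ge_of_tendsto h ?_) chernoffBound_nonneg
  filter_upwards [eventually_gt_atTop 0] with ν hν using chernoffBound_le hν

lemma tendsto_chernoffBound_zero (hφ : Tendsto φ atTop atTop) :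
    Tendsto (chernoffBound φ) (𝓝 0) (𝓝 0) := by
  have husc : UpperSemicontinuous (chernoffBound φ) :=
    upperSemicontinuous_ciInf (fun _ => bddBelow_range_exp_mul_sub)
      fun ν => (by fun_prop : Continuous fun b => exp (ν * b - φ ν)).upperSemicontinuous
  refine tendsto_order.2 ⟨fun y hy => Eventually.of_forall fun b => ?_, fun y hy => ?_⟩
  · exact hy.trans_le chernoffBound_nonneg
  · exact husc 0 y (by rwa [chernoffBound_zero hφ] : chernoffBound φ 0 < y)

lemma bddBelow_range_mul_sub_of_le_mul (hB : ∀ ν > 0, φ ν ≤ ν * B) :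
    BddBelow (range fun ν : {x : ℝ // 0 < x} => (ν : ℝ) * B - φ ν) :=
  ⟨0, by rintro _ ⟨ν, rfl⟩; exact sub_nonneg.2 (hB ν ν.2)⟩

lemma logChernoffBound_eq_zero (h0 : Tendsto φ (𝓝[>] 0) (𝓝 0)) (hB : ∀ ν > 0, φ ν ≤ ν * B) :
    logChernoffBound φ B = 0 := by
  have h : Tendsto (fun ν => ν * B - φ ν) (𝓝[>] 0) (𝓝 0) := by
    simpa using (((continuous_mul_const B).tendsto 0).mono_left nhdsWithin_le_nhds).sub h0
  refine le_antisymm (ge_of_tendsto h ?_) (le_ciInf fun ν => sub_nonneg.2 (hB ν ν.2))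
  filter_upwards [self_mem_nhdsWithin] with ν hν
  exact ciInf_le (bddBelow_range_mul_sub_of_le_mul hB) (⟨ν, hν⟩ : {x : ℝ // 0 < x})

lemma chernoffBound_eq_one (h0 : Tendsto φ (𝓝[>] 0) (𝓝 0)) (hB : ∀ ν > 0, φ ν ≤ ν * B) :
    chernoffBound φ B = 1 := by
  rw [chernoffBound_eq_exp_logChernoffBound (bddBelow_range_mul_sub_of_le_mul hB),
    logChernoffBound_eq_zero h0 hB, exp_zero]

lemma continuousOn_chernoffBound
    (hbdd : ∀ b > 0, BddBelow (range fun ν : {x : ℝ // 0 < x} => (ν : ℝ) * b - φ ν)) :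
    ContinuousOn (chernoffBound φ) (Ioi 0) := by
  have hL := (concaveOn_logChernoffBound (convex_Ioi 0) hbdd).continuousOn isOpen_Ioi
  exact (continuous_exp.comp_continuousOn hL).congr
    fun b hb => chernoffBound_eq_exp_logChernoffBound (hbdd b hb)

lemma strictMonoOn_chernoffBound
    (hbdd : ∀ b > 0, BddBelow (range fun ν : {x : ℝ // 0 < x} => (ν : ℝ) * b - φ ν))
    (h0 : Tendsto φ (𝓝[>] 0) (𝓝 0)) (hB : ∀ ν > 0, φ ν ≤ ν * B)
    (hlt : ∀ b ∈ Ioo 0 B, ∃ ν > 0, ν * b < φ ν) :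
    StrictMonoOn (chernoffBound φ) (Ioc 0 B) := by
  intro x hx y hy hxy
  rw [chernoffBound_eq_exp_logChernoffBound (hbdd x hx.1),
    chernoffBound_eq_exp_logChernoffBound (hbdd y hy.1), exp_lt_exp]
  have hLB := logChernoffBound_eq_zero h0 hB
  have hxB : logChernoffBound φ x < logChernoffBound φ B := by
    obtain ⟨ν, hν, hνx⟩ := hlt x ⟨hx.1, hxy.trans_le hy.2⟩
    exact hLB ▸ (ciInf_le (hbdd x hx.1) ⟨ν, hν⟩).trans_lt (sub_neg.2 hνx)
  rcases hy.2.eq_or_lt with rfl | hyB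
  · exact hxB
  by_contra! hyx
  have hL := concaveOn_logChernoffBound (convex_Ioi 0) hbdd
  have hseg : y ∈ openSegment ℝ B x := by
    rw [openSegment_symm, openSegment_eq_Ioo (hxy.trans hyB)]
    exact ⟨hxy, hyB⟩
  exact (hL.lt_right_of_left_lt (hx.1.trans (hxy.trans hyB)) hx.1 hseg
    (hyx.trans_lt hxB)).not_ge hyx

end General

/-- `-log 𝔼 exp (-ν ‖X‖²)` for a Gaussian vector `X ~ N(m, σ2 • 1)` in `ℝ^K` with `‖m‖² = M2`:
`g` is the Chernoff bound for `P(‖X‖² ≤ b)`, and `M2 + K * σ2 = 𝔼 ‖X‖²`. -/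
noncomputable def laplaceExponent (σ2 M2 : ℝ) (K : ℕ) (ν : ℝ) : ℝ :=
  K / 2 * log (1 + 2 * σ2 * ν) + ν * M2 / (1 + 2 * σ2 * ν)

section LaplaceExponent

variable {σ2 M2 b ν : ℝ} {K : ℕ}

lemma rpow_mul_exp_eq_exp_sub_laplaceExponent (h : 0 < 1 + 2 * σ2 * ν) :
    (1 + 2 * σ2 * ν) ^ (-(K : ℝ) / 2) * exp (ν * b - ν * M2 / (1 + 2 * σ2 * ν)) =
      exp (ν * b - laplaceExponent σ2 M2 K ν) := by
  rw [rpow_def_of_pos h, ← exp_add, laplaceExponent]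
  ring_nf

lemma laplaceExponent_le (hσ : 0 ≤ σ2) (hM : 0 ≤ M2) (hν : 0 ≤ ν) :
    laplaceExponent σ2 M2 K ν ≤ ν * (M2 + K * σ2) := by
  have hu : 1 ≤ 1 + 2 * σ2 * ν := by nlinarith
  have hlog : log (1 + 2 * σ2 * ν) ≤ 2 * σ2 * ν := by
    linarith [log_le_sub_one_of_pos (zero_lt_one.trans_le hu)]
  have hdiv : ν * M2 / (1 + 2 * σ2 * ν) ≤ ν * M2 := div_le_self (by positivity) hu
  calc laplaceExponent σ2 M2 K ν ≤ K / 2 * (2 * σ2 * ν) + ν * M2 := by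
        unfold laplaceExponent; gcongr
    _ = ν * (M2 + K * σ2) := by ring

lemma mul_div_le_laplaceExponent (hσ : 0 ≤ σ2) (hν : 0 ≤ ν) :
    ν * (M2 + K * σ2) / (1 + 2 * σ2 * ν) ≤ laplaceExponent σ2 M2 K ν := by
  have hu : 0 < 1 + 2 * σ2 * ν := by positivity
  calc ν * (M2 + K * σ2) / (1 + 2 * σ2 * ν)
      = K / 2 * (1 - (1 + 2 * σ2 * ν)⁻¹) + ν * M2 / (1 + 2 * σ2 * ν) := by
        field_simp; ring
    _ ≤ laplaceExponent σ2 M2 K ν := by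
        unfold laplaceExponent; gcongr; exact one_sub_inv_le_log_of_pos hu

lemma exists_mul_lt_laplaceExponent (hσ : 0 < σ2) (hb : 0 < b) (hbB : b < M2 + K * σ2) :
    ∃ ν > 0, ν * b < laplaceExponent σ2 M2 K ν := by
  set ν := (M2 + K * σ2 - b) / (4 * σ2 * b)
  have hν : 0 < ν := by have := sub_pos.2 hbB; positivity
  have hνb : 2 * σ2 * ν * b = (M2 + K * σ2 - b) / 2 := by
    simp only [ν]; field_simp; ring
  refine ⟨ν, hν, lt_of_lt_of_le ?_ (mul_div_le_laplaceExponent hσ.le hν.le)⟩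
  rw [lt_div_iff₀ (by positivity)]
  nlinarith

lemma tendsto_laplaceExponent_atTop (hσ : 0 < σ2) (hM : 0 ≤ M2) (hK : 0 < K) :
    Tendsto (laplaceExponent σ2 M2 K) atTop atTop := by
  have hlog : Tendsto (fun ν => (K : ℝ) / 2 * log (1 + 2 * σ2 * ν)) atTop atTop :=
    (tendsto_log_atTop.comp (tendsto_atTop_add_const_left _ _
      (tendsto_id.const_mul_atTop (by positivity)))).const_mul_atTop (by positivity)
  refine tendsto_atTop_mono' _ ?_ hlog
  filter_upwards [eventually_ge_atTop 0] with ν hν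
  unfold laplaceExponent
  have : 0 ≤ ν * M2 / (1 + 2 * σ2 * ν) := by positivity
  linarith

lemma tendsto_laplaceExponent_zero : Tendsto (laplaceExponent σ2 M2 K) (𝓝 0) (𝓝 0) := by
  have : ContinuousAt (laplaceExponent σ2 M2 K) 0 := by
    unfold laplaceExponent
    fun_prop (disch := simp)
  simpa [laplaceExponent] using this.tendsto

lemma log_le_log_add_div_sub_one {x t : ℝ} (hx : 0 < x) (ht : 0 < t) :
    log x ≤ log t + x / t - 1 := by
  have := log_le_sub_one_of_pos (div_pos hx ht)
  rw [log_div hx.ne' ht.ne'] at this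
  linarith

lemma bddBelow_mul_sub_laplaceExponent (hσ : 0 < σ2) (hM : 0 ≤ M2) (hK : 0 < K) (hb : 0 < b) :
    BddBelow (range fun ν : {x : ℝ // 0 < x} => (ν : ℝ) * b - laplaceExponent σ2 M2 K ν) := by
  have hK' : (0 : ℝ) < K := Nat.cast_pos.2 hK
  set t := K * σ2 / b
  refine ⟨-(K / 2 * (log t - 1) + b / (2 * σ2) + M2 / (2 * σ2)), ?_⟩
  rintro _ ⟨⟨ν, hν⟩, rfl⟩
  have hu : 0 < 1 + 2 * σ2 * ν := by positivity
  have hlog := log_le_log_add_div_sub_one hu (by positivity : 0 < t)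
  have hK_log := mul_le_mul_of_nonneg_left hlog (by positivity : (0 : ℝ) ≤ K / 2)
  have hlin : K / 2 * ((1 + 2 * σ2 * ν) / t) = b / (2 * σ2) + ν * b := by
    simp only [t]; field_simp
  have hM_div : ν * M2 / (1 + 2 * σ2 * ν) ≤ M2 / (2 * σ2) := by
    rw [div_le_div_iff₀ hu (by positivity)]; nlinarith
  simp only [laplaceExponent]
  linarith

end LaplaceExponent

end Chernoff

open Chernoff in
theorem chernoff_inf_limits_and_unique_threshold (σ2 M2 : ℝ) (K : ℕ)
    (hσ : 0 < σ2) (hK : 1 ≤ K) (hM : 0 ≤ M2) :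
    Tendsto
      (fun b : ℝ =>
        ⨅ ν : {x : ℝ // 0 < x},
          (1 + 2 * σ2 * (ν : ℝ)) ^ (-(K : ℝ) / 2) *
            Real.exp ((ν : ℝ) * b - (ν : ℝ) * M2 / (1 + 2 * σ2 * (ν : ℝ))))
      (nhdsWithin 0 (Set.Ioi 0)) (nhds 0) ∧
    Tendsto
      (fun b : ℝ =>
        ⨅ ν : {x : ℝ // 0 < x},
          (1 + 2 * σ2 * (ν : ℝ)) ^ (-(K : ℝ) / 2) *
            Real.exp ((ν : ℝ) * b - (ν : ℝ) * M2 / (1 + 2 * σ2 * (ν : ℝ))))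
      (nhdsWithin (M2 + (K : ℝ) * σ2) (Set.Iio (M2 + (K : ℝ) * σ2))) (nhds 1) ∧
    ∀ ε : ℝ, ε ∈ Set.Ioo (0 : ℝ) 1 →
      ∃! b : ℝ, b ∈ Set.Ioo 0 (M2 + (K : ℝ) * σ2) ∧
        (⨅ ν : {x : ℝ // 0 < x},
          (1 + 2 * σ2 * (ν : ℝ)) ^ (-(K : ℝ) / 2) *
            Real.exp ((ν : ℝ) * b - (ν : ℝ) * M2 / (1 + 2 * σ2 * (ν : ℝ)))) = ε := by
  have hs : ∀ b : ℝ, (⨅ ν : {x : ℝ // 0 < x},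
      (1 + 2 * σ2 * (ν : ℝ)) ^ (-(K : ℝ) / 2) *
        Real.exp ((ν : ℝ) * b - (ν : ℝ) * M2 / (1 + 2 * σ2 * (ν : ℝ)))) =
      chernoffBound (laplaceExponent σ2 M2 K) b := fun b =>
    iInf_congr fun ν => rpow_mul_exp_eq_exp_sub_laplaceExponent (by have := ν.2; positivity)
  simp only [hs]
  have hB : 0 < M2 + (K : ℝ) * σ2 := by positivity
  have hbdd := fun b (hb : 0 < b) => bddBelow_mul_sub_laplaceExponent hσ hM hK hb
  have h0 : Tendsto (laplaceExponent σ2 M2 K) (𝓝[>] 0) (𝓝 0) :=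
    tendsto_laplaceExponent_zero.mono_left nhdsWithin_le_nhds
  have hle := fun ν (hν : 0 < ν) => laplaceExponent_le (K := K) hσ.le hM hν.le
  have hcont := continuousOn_chernoffBound hbdd
  have hone := chernoffBound_eq_one h0 hle
  have hzero := (tendsto_chernoffBound_zero (tendsto_laplaceExponent_atTop hσ hM hK)).mono_left
    (nhdsWithin_le_nhds (s := Ioi 0))
  refine ⟨hzero, ?_, fun ε hε => ?_⟩
  · exact hone ▸ (hcont.continuousAt (Ioi_mem_nhds hB)).tendsto.mono_left nhdsWithin_le_nhds
  · exact existsUnique_mem_Ioo_eq_of_strictMonoOn hB (hcont.mono Ioc_subset_Ioi_self)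
      (strictMonoOn_chernoffBound hbdd h0 hle fun b hb =>
        exists_mul_lt_laplaceExponent hσ hb.1 hb.2) hzero (hone ▸ hε)
end

section
/- Polynomial lower bound (Theorem 1): for β non-central χ²-distributed with K degrees of freedom, noncentrality parameter M²/σ², define β⊥_poly = 2σ² (ε Γ(K/2 + 1))^{2/K} exp(M²/(Kσ²)). In the central case M² = 0, P(β ≤ β⊥_poly) ≤ ε for all ε ∈ (0, 1). -/
open MeasureTheory ProbabilityTheory Real
open scoped NNReal ENNReal

/-!
Bounding each Gaussian density by its maximum `(2πσ²)^(-1/2)` dominates the product measure of the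
ball `{∑ xₖ² ≤ t}` by `(2πσ²)^(-K/2)` times its Lebesgue volume `π^(K/2) t^(K/2) / Γ(K/2 + 1)`,
which is the first term of the series of the χ² distribution function. For the given threshold `t`
this product is exactly `ε`.
-/

namespace MeasureTheory.Measure

variable {ι : Type*} [Fintype ι] {α : ι → Type*} [∀ i, MeasurableSpace (α i)]

theorem pi_mono {μ ν : ∀ i, Measure (α i)} (h : ∀ i, μ i ≤ ν i) :
    Measure.pi μ ≤ Measure.pi ν := by
  refine Measure.le_iff.2 fun s hs => ?_
  rw [Measure.pi_def, Measure.pi_def, toMeasure_apply _ _ hs, toMeasure_apply _ _ hs]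
  refine (OuterMeasure.le_boundedBy.2 fun t => ?_) s
  refine (OuterMeasure.boundedBy_le t).trans ?_
  exact Finset.prod_le_prod' fun i _ => Measure.le_iff'.1 (h i) _

theorem pi_smul (c : ι → ℝ≥0) (μ : ∀ i, Measure (α i)) [∀ i, SigmaFinite (μ i)] :
    Measure.pi (fun i => c i • μ i) = (∏ i, c i) • Measure.pi μ := by
  refine Measure.pi_eq fun s hs => ?_
  simp only [Measure.smul_apply, Measure.pi_pi, ENNReal.smul_def,
    smul_eq_mul, ENNReal.ofNNReal_finsetProd, Finset.prod_mul_distrib]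

end MeasureTheory.Measure

namespace ProbabilityTheory

lemma gaussianPDFReal_le (μ : ℝ) (v : ℝ≥0) (x : ℝ) :
    gaussianPDFReal μ v x ≤ (√(2 * π * v))⁻¹ := by
  rw [gaussianPDFReal]
  refine mul_le_of_le_one_right (by positivity) (Real.exp_le_one_iff.2 ?_)
  exact div_nonpos_of_nonpos_of_nonneg (neg_nonpos.2 (sq_nonneg _)) (by positivity)

lemma gaussianReal_le_smul_volume (μ : ℝ) {v : ℝ≥0} (hv : v ≠ 0) :
    gaussianReal μ v ≤ (√(2 * π * v))⁻¹.toNNReal • volume := by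
  rw [gaussianReal_of_var_ne_zero _ hv, ENNReal.smul_def, ← withDensity_const]
  refine withDensity_mono (Filter.Eventually.of_forall fun x => ?_)
  exact ENNReal.ofReal_le_ofReal (gaussianPDFReal_le μ v x)

end ProbabilityTheory

theorem MeasureTheory.volume_sum_sq_le (ι : Type*) [Fintype ι] [Nonempty ι] {r : ℝ} (hr : 0 ≤ r) :
    volume {x : ι → ℝ | ∑ i, x i ^ 2 ≤ r} =
      .ofReal (√r) ^ Fintype.card ι *
        .ofReal (√π ^ Fintype.card ι / Gamma (Fintype.card ι / 2 + 1)) := by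
  have hball : {x : ι → ℝ | ∑ i, x i ^ 2 ≤ r} =
      WithLp.toLp 2 ⁻¹' Metric.closedBall (0 : EuclideanSpace ℝ ι) √r := by
    ext x
    simp [Real.le_sqrt (norm_nonneg _) hr, EuclideanSpace.real_norm_sq_eq]
  rw [hball, (PiLp.volume_preserving_toLp ι).measure_preimage
    measurableSet_closedBall.nullMeasurableSet, EuclideanSpace.volume_closedBall]

lemma sqrt_rpow_two_div_pow {a : ℝ} (ha : 0 ≤ a) {n : ℕ} (hn : n ≠ 0) :
    √(a ^ (2 / (n : ℝ))) ^ n = a := by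
  rw [Real.sqrt_eq_rpow, ← Real.rpow_mul ha, show 2 / (n : ℝ) * (1 / 2) = (n : ℝ)⁻¹ by ring,
    Real.rpow_inv_natCast_pow ha hn]

theorem poly_lower_bound_central (K : ℕ) (hK : 1 ≤ K) (σ2 : ℝ≥0) (hσ : 0 < σ2)
    (ε : ℝ) (hε : ε ∈ Set.Ioo (0 : ℝ) 1) :
    ((Measure.pi fun _ : Fin K => gaussianReal 0 σ2)
        {x | ∑ k, (x k) ^ 2 ≤
          2 * (σ2 : ℝ) * (ε * Real.Gamma ((K : ℝ) / 2 + 1)) ^ (2 / (K : ℝ))}).toReal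
      ≤ ε := by
  have : Nonempty (Fin K) := ⟨⟨0, hK⟩⟩
  set G := Gamma ((K : ℝ) / 2 + 1)
  set t := 2 * (σ2 : ℝ) * (ε * G) ^ (2 / (K : ℝ)) with ht
  set c := (√(2 * π * σ2))⁻¹ with hc
  have hG : 0 < G := Gamma_pos_of_pos (by positivity)
  have hεG : 0 ≤ ε * G := mul_nonneg hε.1.le hG.le
  have hroot : √t * √π * c = √((ε * G) ^ (2 / (K : ℝ))) := by
    rw [← sqrt_mul (by positivity), hc, ← sqrt_inv, ← sqrt_mul (by positivity)]
    congr 1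
    rw [ht]
    field_simp
  refine ENNReal.toReal_le_of_le_ofReal hε.1.le ?_
  calc _ ≤ Measure.pi (fun _ : Fin K => c.toNNReal • volume) {x | ∑ k, x k ^ 2 ≤ t} :=
        Measure.pi_mono (fun _ => gaussianReal_le_smul_volume 0 hσ.ne') _
    _ = .ofReal c ^ K * volume {x : Fin K → ℝ | ∑ k, x k ^ 2 ≤ t} := by
        rw [Measure.pi_smul, ← volume_pi, Measure.smul_apply, Finset.prod_const, Finset.card_univ,
          Fintype.card_fin, ENNReal.smul_def, smul_eq_mul, ENNReal.coe_pow]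
        rfl
    _ = .ofReal ((√t * √π * c) ^ K / G) := by
        rw [volume_sum_sq_le _ (by positivity), Fintype.card_fin,
          ← ENNReal.ofReal_pow (by positivity), ← ENNReal.ofReal_pow (by positivity),
          ← ENNReal.ofReal_mul (by positivity), ← ENNReal.ofReal_mul (by positivity)]
        congr 1
        ring
    _ = .ofReal ε := by
        rw [hroot, sqrt_rpow_two_div_pow hεG (by omega), mul_div_cancel_right₀ _ hG.ne']
end
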